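/- arXiv:1106.5581 — 6 statements merged into one kernel-verified Lean document; each statement's English description precedes it below -/
import Mathlib

section
/- For every positive integer N, the product ∏_{j=1}^N Γ(j/2)² equals (Γ(1/2)/Γ((N+1)/2)) · 2^{-N(N-1)/2} · π^{N/2} · G(N+1), where G(N+1) = ∏_{k=1}^{N-1} k! is the Barnes G-function at integer arguments. -/
open Finset

/-!
Writing `Γ(s)² = Γ(s) / Γ(s + 1/2) · Γ(s) Γ(s + 1/2)` and applying Legendre's duplication formula
to the second factor at `s = j/2` gives `Γ(j/2)² = Γ(j/2) / Γ((j+1)/2) · 2^(1-j) √π (j-1)!`.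
In the product over `j = 1, …, N` the quotients telescope to `Γ(1/2) / Γ((N+1)/2)`, the powers of
two add up to `2^(-N(N-1)/2)`, and the factorials give `G(N+1)`.
-/

namespace Real

theorem Gamma_sq_eq_div_mul_Gamma_two_mul {s : ℝ} (hs : 0 < s) :
    Gamma s ^ 2 = Gamma s / Gamma (s + 1 / 2) * (Gamma (2 * s) * 2 ^ (1 - 2 * s) * √π) := by
  have hne : Gamma (s + 1 / 2) ≠ 0 := (Gamma_pos_of_pos (by positivity)).ne'
  rw [← Gamma_mul_Gamma_add_half, div_mul_eq_mul_div, mul_div_assoc, mul_div_cancel_right₀ _ hne,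
    sq]

theorem Gamma_half_succ_sq (n : ℕ) :
    Gamma (((n + 1 : ℕ) : ℝ) / 2) ^ 2 =
      Gamma (((n : ℝ) + 1) / 2) / Gamma (((n : ℝ) + 1 + 1) / 2) *
        (Nat.factorial n * 2 ^ (-(n : ℝ)) * π ^ ((1 : ℝ) / 2)) := by
  have h := Gamma_sq_eq_div_mul_Gamma_two_mul (s := ((n : ℝ) + 1) / 2) (by positivity)
  rw [show ((n : ℝ) + 1) / 2 + 1 / 2 = ((n : ℝ) + 1 + 1) / 2 by ring,
    show 2 * (((n : ℝ) + 1) / 2) = n + 1 by ring, show 1 - ((n : ℝ) + 1) = -n by ring,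
    Gamma_nat_eq_factorial, sqrt_eq_rpow] at h
  exact_mod_cast h

end Real

open Real in
theorem gamma_half_prod_general (N : ℕ) :
    ∏ j ∈ Finset.Icc 1 N, (Real.Gamma ((j : ℝ) / 2)) ^ 2 =
      (Real.Gamma (1 / 2) / Real.Gamma (((N : ℝ) + 1) / 2)) *
        (2 : ℝ) ^ (-((N : ℝ) * ((N : ℝ) - 1)) / 2) *
        Real.pi ^ ((N : ℝ) / 2) *
        ∏ k ∈ Finset.range N, (Nat.factorial k : ℝ) := by
  induction N with
  | zero => simp [(Gamma_pos_of_pos (inv_pos.2 two_pos)).ne']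
  | succ n ih =>
    have two_pow : (2 : ℝ) ^ (-((n : ℝ) * (n - 1)) / 2) * 2 ^ (-(n : ℝ)) =
        2 ^ (-((n + 1 : ℝ) * (n + 1 - 1)) / 2) := by
      rw [← rpow_add two_pos]; ring_nf
    have pi_pow : π ^ ((n : ℝ) / 2) * π ^ ((1 : ℝ) / 2) = π ^ (((n : ℝ) + 1) / 2) := by
      rw [← rpow_add pi_pos]; ring_nf
    rw [prod_Icc_succ_top (by omega), ih, Gamma_half_succ_sq, prod_range_succ, Nat.cast_succ,
      ← two_pow, ← pi_pow]
    field_simp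

theorem gamma_half_prod (N : ℕ) (hN : 0 < N) :
    ∏ j ∈ Finset.Icc 1 N, (Real.Gamma ((j : ℝ) / 2)) ^ 2 =
      (Real.Gamma (1 / 2) / Real.Gamma (((N : ℝ) + 1) / 2)) *
        (2 : ℝ) ^ (-((N : ℝ) * ((N : ℝ) - 1)) / 2) *
        Real.pi ^ ((N : ℝ) / 2) *
        ∏ k ∈ Finset.range N, (Nat.factorial k : ℝ) :=
  gamma_half_prod_general N
end

section
/- Define P_N = Γ((N+1)/2)^N / G(N+1) for positive integers N, where G is the Barnes G-function. Then for every even integer N ≥ 4, P_N = π^{N/2} · ((N-1)^{N-1}(N-3)^{N-3}···3^3) / (2^{N²/2} · (N-2)²(N-4)⁴···2^{N-2}). -/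
/-!
Write `N = 2m`. The half-integer value `Γ(m + 1/2) = (2m-1)‼ √π / 2^m` makes the numerator
`Γ((N+1)/2)^N = π^m ∏_{j odd < N} j^N / 2^{N²/2}`, while the denominator is the superfactorial
`∏_{k<N} k! = ∏_{1 ≤ j < N} j^{N-j}`. Splitting the latter by the parity of `j`, the odd
factors `j^{N-j}` cancel against `j^N`, leaving `j^j` on odd `j` over `j^{N-j}` on even `j`.
-/

noncomputable def P (N : ℕ) : ℝ :=
  Real.Gamma (((N : ℝ) + 1) / 2) ^ N / ∏ k ∈ Finset.range N, (Nat.factorial k : ℝ)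

open Finset Nat Real

theorem prod_range_factorial_eq_prod_Ico_pow (N : ℕ) :
    ∏ k ∈ range N, k ! = ∏ j ∈ Ico 1 N, j ^ (N - j) := by
  induction N with
  | zero => simp
  | succ N ih =>
    rcases N.eq_zero_or_pos with rfl | hN
    · simp
    rw [prod_range_succ, ih, prod_Ico_succ_top hN, Nat.add_sub_cancel_left, pow_one,
      ← prod_Ico_id_eq_factorial, prod_Ico_succ_top hN, ← mul_assoc, ← prod_mul_distrib]
    congr 1
    refine prod_congr rfl fun j hj => ?_
    rw [← pow_succ, (by have := (mem_Ico.mp hj).2; omega : N - j + 1 = N + 1 - j)]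

theorem Nat.doubleFactorial_two_mul_sub_one (m : ℕ) :
    (2 * m - 1)‼ = ∏ j ∈ (Ico 1 (2 * m)).filter Odd, j := by
  induction m with
  | zero => rfl
  | succ m ih =>
    have hodd : (Ico 1 (2 * (m + 1))).filter Odd =
        insert (2 * m + 1) ((Ico 1 (2 * m)).filter Odd) := by
      ext j
      simp only [mem_filter, mem_Ico, mem_insert, Nat.odd_iff]
      omega
    rw [hodd, prod_insert (by simp), ← ih, (by omega : 2 * (m + 1) - 1 = 2 * m + 1),
      doubleFactorial_add_one]

theorem Real.Gamma_two_mul_add_one_div_two_pow (m : ℕ) :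
    Gamma (((2 * m : ℕ) + 1) / 2) ^ (2 * m) =
      π ^ m * (∏ j ∈ (Ico 1 (2 * m)).filter Odd, (j : ℝ) ^ (2 * m)) / 2 ^ (2 * m ^ 2) := by
  have hodd : ((2 * m - 1)‼ : ℝ) = ∏ j ∈ (Ico 1 (2 * m)).filter Odd, (j : ℝ) := by
    rw [doubleFactorial_two_mul_sub_one, Nat.cast_prod]
  rw [(by push_cast; ring : ((2 * m : ℕ) + 1 : ℝ) / 2 = m + 1 / 2), Gamma_nat_add_half, hodd,
    prod_pow, div_pow, mul_pow, pow_mul √π, sq_sqrt pi_pos.le, ← pow_mul]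
  ring

theorem prod_filter_odd_Icc_three_eq_prod_filter_odd_Ico_one {M : Type*} [CommMonoid M]
    (f : ℕ → M) (hf : f 1 = 1) (N : ℕ) :
    ∏ j ∈ (Icc 3 (N - 1)).filter Odd, f j = ∏ j ∈ (Ico 1 N).filter Odd, f j := by
  refine prod_subset (fun j => ?_) fun j hj hj' => ?_
  · simp only [mem_filter, mem_Icc, mem_Ico, Nat.odd_iff]
    omega
  · simp only [mem_filter, mem_Icc, mem_Ico, Nat.odd_iff] at hj hj'
    rw [(by omega : j = 1), hf]

theorem filter_even_Icc_two_eq_filter_not_odd_Ico_one {N : ℕ} (hN : Even N) :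
    (Icc 2 (N - 2)).filter Even = (Ico 1 N).filter (¬Odd ·) := by
  obtain ⟨m, rfl⟩ := hN
  ext j
  simp only [mem_filter, mem_Icc, mem_Ico, Nat.not_odd_iff_even, Nat.even_iff]
  omega

theorem P_even_explicit_general (N : ℕ) (hNe : Even N) :
    P N = Real.pi ^ (N / 2) *
        (∏ j ∈ (Finset.Icc 3 (N - 1)).filter (fun j => Odd j), (j : ℝ) ^ j) /
        (2 ^ (N ^ 2 / 2) *
          ∏ j ∈ (Finset.Icc 2 (N - 2)).filter (fun j => Even j), (j : ℝ) ^ (N - j)) := by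
  rw [filter_even_Icc_two_eq_filter_not_odd_Ico_one hNe,
    prod_filter_odd_Icc_three_eq_prod_filter_odd_Ico_one _ (by simp)]
  obtain ⟨m, rfl⟩ := hNe
  simp only [← two_mul]
  set O := (Ico 1 (2 * m)).filter Odd
  have hfact : ∏ k ∈ range (2 * m), (k ! : ℝ) =
      (∏ j ∈ O, (j : ℝ) ^ (2 * m - j)) *
        ∏ j ∈ (Ico 1 (2 * m)).filter (¬Odd ·), (j : ℝ) ^ (2 * m - j) := by
    rw [prod_filter_mul_prod_filter_not]
    exact_mod_cast prod_range_factorial_eq_prod_Ico_pow (2 * m)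
  have hsplit : ∏ j ∈ O, (j : ℝ) ^ (2 * m) =
      (∏ j ∈ O, (j : ℝ) ^ j) * ∏ j ∈ O, (j : ℝ) ^ (2 * m - j) := by
    rw [← prod_mul_distrib]
    refine prod_congr rfl fun j hj => ?_
    rw [← pow_add, Nat.add_sub_cancel' (mem_Ico.mp (mem_filter.mp hj).1).2.le]
  have hO : ∏ j ∈ O, (j : ℝ) ^ (2 * m - j) ≠ 0 :=
    prod_ne_zero_iff.2 fun j hj => pow_ne_zero _ (cast_ne_zero.2 (mem_filter.mp hj).2.pos.ne')
  rw [P, hfact, Real.Gamma_two_mul_add_one_div_two_pow, hsplit, (by omega : 2 * m / 2 = m),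
    (by ring_nf; omega : (2 * m) ^ 2 / 2 = 2 * m ^ 2)]
  field_simp

theorem P_even_explicit (N : ℕ) (hN : 4 ≤ N) (hNe : Even N) :
    P N = Real.pi ^ (N / 2) *
        (∏ j ∈ (Finset.Icc 3 (N - 1)).filter (fun j => Odd j), (j : ℝ) ^ j) /
        (2 ^ (N ^ 2 / 2) *
          ∏ j ∈ (Finset.Icc 2 (N - 2)).filter (fun j => Even j), (j : ℝ) ^ (N - j)) :=
  P_even_explicit_general N hNe
end

section
/- Define P_N = Γ((N+1)/2)^N / G(N+1) for positive integers N. Then for every odd integer N ≥ 3, P_N = ((N-1)^{N-1}(N-3)^{N-3}···2²) / (2^{N(N-1)/2} · (N-2)²(N-4)⁴···3^{N-3}). -/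
open Finset Nat

theorem prod_filter_even_Icc_two {M : Type*} [CommMonoid M] (f : ℕ → M) (m : ℕ) :
    ∏ j ∈ (Icc 2 (2 * m)).filter Even, f j = ∏ k ∈ range m, f (2 * k + 2) := by
  refine prod_nbij' (fun j => (j - 2) / 2) (fun k => 2 * k + 2) ?_ ?_ ?_ ?_ ?_ <;>
    simp only [mem_filter, mem_Icc, mem_range, Nat.even_iff] <;> intro j hj <;>
    first | omega | exact congrArg f (by omega)

theorem prod_filter_odd_Icc_three {M : Type*} [CommMonoid M] (f : ℕ → M) (hf : f 1 = 1)
    (m : ℕ) :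
    ∏ j ∈ (Icc 3 (2 * m - 1)).filter Odd, f j = ∏ k ∈ range m, f (2 * k + 1) := by
  cases m with
  | zero => rfl
  | succ n =>
    rw [prod_range_succ', mul_zero, zero_add, hf, mul_one]
    refine prod_nbij' (fun j => (j - 3) / 2) (fun k => 2 * k + 3) ?_ ?_ ?_ ?_ ?_ <;>
      simp only [mem_filter, mem_Icc, mem_range, Nat.odd_iff] <;> intro j hj <;>
      first | omega | exact congrArg f (by omega)

theorem prod_range_succ_two_mul_add_one (m : ℕ) :
    ∏ k ∈ range (m + 1), (2 * k + 1) = (2 * m + 1)‼ := by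
  rw [prod_range_succ', doubleFactorial_eq_prod_odd, mul_zero, zero_add, mul_one]

theorem factorial_two_mul_add_one (m : ℕ) : (2 * m + 1)! = (2 * m + 1)‼ * 2 ^ m * m ! := by
  rw [factorial_eq_mul_doubleFactorial, doubleFactorial_two_mul, mul_assoc]

theorem prod_range_succ_odd_pow_two_mul_sub (m : ℕ) :
    ∏ k ∈ range (m + 1), (2 * k + 1) ^ (2 * (m + 1 - k)) =
      (∏ k ∈ range m, (2 * k + 1) ^ (2 * (m - k))) * (2 * m + 1)‼ ^ 2 := by
  have hsplit : ∀ k ∈ range (m + 1),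
      (2 * k + 1) ^ (2 * (m + 1 - k)) = (2 * k + 1) ^ (2 * (m - k)) * (2 * k + 1) ^ 2 := by
    intro k hk
    rw [← pow_add]
    have hkm := mem_range.1 hk
    congr 1
    omega
  rw [prod_congr rfl hsplit, prod_mul_distrib, prod_pow, prod_range_succ_two_mul_add_one,
    prod_range_succ, Nat.sub_self, mul_zero, pow_zero, mul_one]

theorem superFactorial_pos (n : ℕ) : 0 < superFactorial n := by
  rw [← prod_range_succ_factorial]
  exact prod_pos fun k _ => factorial_pos k

theorem prod_pow_self_mul_superFactorial_two_mul (m : ℕ) :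
    (∏ k ∈ range m, (2 * k + 2) ^ (2 * k + 2)) * superFactorial (2 * m) =
      m ! ^ (2 * m + 1) * 2 ^ (m * (2 * m + 1)) *
        ∏ k ∈ range m, (2 * k + 1) ^ (2 * (m - k)) := by
  induction m with
  | zero => rfl
  | succ m ih =>
    have hsf : superFactorial (2 * (m + 1)) =
        (2 * m + 2) * (2 * m + 1)! ^ 2 * superFactorial (2 * m) := by
      rw [show 2 * (m + 1) = 2 * m + 1 + 1 by ring, superFactorial_succ, superFactorial_succ,
        factorial_succ (2 * m + 1)]
      ring
    rw [prod_range_succ, prod_range_succ_odd_pow_two_mul_sub, hsf, factorial_succ m,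
      factorial_two_mul_add_one, show 2 * m + 2 = 2 * (m + 1) by ring]
    calc _ = ((∏ k ∈ range m, (2 * k + 2) ^ (2 * k + 2)) * superFactorial (2 * m)) *
          (2 * (m + 1)) ^ (2 * (m + 1)) * (2 * (m + 1) * ((2 * m + 1)‼ * 2 ^ m * m !) ^ 2) := by
          ring
      _ = _ := by
          rw [ih]
          simp only [mul_pow]
          ring

theorem P_two_mul_add_one (m : ℕ) :
    P (2 * m + 1) = (m ! : ℝ) ^ (2 * m + 1) / (superFactorial (2 * m) : ℝ) := by
  rw [P, ← prod_range_succ_factorial, Nat.cast_prod]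
  congr 2
  rw [← Real.Gamma_nat_eq_factorial]
  congr 1
  push_cast
  ring

theorem P_odd_explicit_general (N : ℕ) (hNo : Odd N) :
    P N = (∏ j ∈ (Finset.Icc 2 (N - 1)).filter (fun j => Even j), (j : ℝ) ^ j) /
        (2 ^ (N * (N - 1) / 2) *
          ∏ j ∈ (Finset.Icc 3 (N - 2)).filter (fun j => Odd j), (j : ℝ) ^ (N - j)) := by
  obtain ⟨m, rfl⟩ := hNo
  have hexp : (2 * m + 1) * (2 * m + 1 - 1) / 2 = m * (2 * m + 1) := by
    rw [Nat.add_sub_cancel, mul_comm, mul_assoc, Nat.mul_div_cancel_left _ two_pos]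
  rw [hexp, Nat.add_sub_cancel, show 2 * m + 1 - 2 = 2 * m - 1 by omega,
    prod_filter_even_Icc_two, prod_filter_odd_Icc_three _ (by simp), P_two_mul_add_one]
  have hodd : ∏ k ∈ range m, ((2 * k + 1 : ℕ) : ℝ) ^ (2 * m + 1 - (2 * k + 1)) =
      ∏ k ∈ range m, ((2 * k + 1 : ℕ) : ℝ) ^ (2 * (m - k)) :=
    prod_congr rfl fun k _ => congrArg _ (by omega)
  have hsf : (superFactorial (2 * m) : ℝ) ≠ 0 := Nat.cast_ne_zero.2 (superFactorial_pos _).ne'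
  have hden : (2 : ℝ) ^ (m * (2 * m + 1)) *
      ∏ k ∈ range m, ((2 * k + 1 : ℕ) : ℝ) ^ (2 * (m - k)) ≠ 0 :=
    (mul_pos (by positivity) (prod_pos fun k _ => by positivity)).ne'
  rw [hodd, div_eq_div_iff hsf hden, ← mul_assoc]
  exact_mod_cast (prod_pow_self_mul_superFactorial_two_mul m).symm

theorem P_odd_explicit (N : ℕ) (hN : 3 ≤ N) (hNo : Odd N) :
    P N = (∏ j ∈ (Finset.Icc 2 (N - 1)).filter (fun j => Even j), (j : ℝ) ^ j) /
        (2 ^ (N * (N - 1) / 2) *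
          ∏ j ∈ (Finset.Icc 3 (N - 2)).filter (fun j => Odd j), (j : ℝ) ^ (N - j)) :=
  P_odd_explicit_general N hNo
end

section
/- As x → ∞, Γ(x+1/2)/Γ(x) = √x · (1 - 1/(8x) + O(1/x²)). -/
/-!
Write `F x = Γ(x + 1/2) / Γ(x)`. The functional equation of `Γ` gives `F x * F (x + 1/2) = x`,
and log-convexity of `Γ` gives `F x ^ 2 ≤ x`; together they pin `F x ^ 2` to within `1/4` of
`x - 1/4`. The normalised square `R x = F x ^ 2 / (x - 1/4)` therefore tends to `1` and satisfies
`R x * R (x + 1/2) = x ^ 2 / (x ^ 2 - 1/16)`. The right-hand side decreases in `x`, so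
`R (x + 1) ≤ R x`; a sequence decreasing to `1` stays above `1`, whence
`1 ≤ R x ≤ x ^ 2 / (x ^ 2 - 1/16)`, i.e. `F x ^ 2 = x - 1/4 + O(1/x)`. Taking square roots gives
the expansion.
-/

open Filter Asymptotics Topology

lemma abs_sub_le_abs_sq_sub_div {a b : ℝ} (ha : 0 ≤ a) (hb : 0 < b) :
    |a - b| ≤ |a ^ 2 - b ^ 2| / b := by
  rw [le_div_iff₀ hb, sq_sub_sq, abs_mul, abs_of_pos (by linarith : 0 < a + b), mul_comm]
  gcongr
  linarith

lemma le_of_tendsto_of_map_add_one_le {f : ℝ → ℝ} {a c x : ℝ}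
    (hf : ∀ y, a < y → f (y + 1) ≤ f y) (hlim : Tendsto f atTop (𝓝 c)) (hx : a < x) :
    c ≤ f x := by
  have hstep : ∀ n : ℕ, f (x + n) ≤ f x := by
    intro n
    induction n with
    | zero => simp
    | succ n ih =>
      have hn : a < x + n := by linarith [(Nat.cast_nonneg n : (0 : ℝ) ≤ n)]
      push_cast
      rw [← add_assoc]
      exact (hf _ hn).trans ih
  exact le_of_tendsto' (hlim.comp (tendsto_atTop_add_const_left _ x tendsto_natCast_atTop_atTop))
    hstep

lemma antitoneOn_sq_div_sq_sub :
    AntitoneOn (fun x : ℝ => x ^ 2 / (x ^ 2 - 1/16)) (Set.Ioi (1/4)) := by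
  intro x (hx : 1/4 < x) y _ hxy
  have hx16 : 0 < x ^ 2 - 1/16 := by nlinarith
  have hy16 : 0 < y ^ 2 - 1/16 := by nlinarith
  dsimp only
  rw [div_le_div_iff₀ hy16 hx16]
  nlinarith [mul_le_mul hxy hxy (by linarith) (by linarith)]

noncomputable def gammaRatio (x : ℝ) : ℝ := Real.Gamma (x + 1/2) / Real.Gamma x

namespace gammaRatio

variable {x : ℝ}

lemma pos (hx : 0 < x) : 0 < gammaRatio x :=
  div_pos (Real.Gamma_pos_of_pos (by linarith)) (Real.Gamma_pos_of_pos hx)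

lemma mul_add_half (hx : 0 < x) : gammaRatio x * gammaRatio (x + 1/2) = x := by
  have hΓ : Real.Gamma x ≠ 0 := (Real.Gamma_pos_of_pos hx).ne'
  have hΓ' : Real.Gamma (x + 1/2) ≠ 0 := (Real.Gamma_pos_of_pos (by linarith)).ne'
  rw [gammaRatio, gammaRatio, add_assoc, add_halves, Real.Gamma_add_one hx.ne']
  field_simp

lemma sq_le (hx : 0 < x) : gammaRatio x ^ 2 ≤ x := by
  have hΓ := Real.Gamma_pos_of_pos hx
  have hconv := Real.Gamma_mul_add_mul_le_rpow_Gamma_mul_rpow_Gamma (s := x) (t := x + 1)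
    (a := 1/2) (b := 1/2) hx (by linarith) (by norm_num) (by norm_num) (by norm_num)
  rw [← Real.sqrt_eq_rpow, ← Real.sqrt_eq_rpow, ← Real.sqrt_mul hΓ.le,
    Real.Gamma_add_one hx.ne', show 1/2 * x + 1/2 * (x + 1) = x + 1/2 by ring,
    Real.le_sqrt (Real.Gamma_pos_of_pos (by linarith)).le (by positivity)] at hconv
  rw [gammaRatio, div_pow, div_le_iff₀ (by positivity)]
  linarith

lemma sub_half_le_sq (hx : 0 < x) : x - 1/2 ≤ gammaRatio x ^ 2 := by
  have hle := sq_le (show 0 < x + 1/2 by linarith)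
  have hmul : gammaRatio x ^ 2 * gammaRatio (x + 1/2) ^ 2 = x ^ 2 := by
    rw [← mul_pow, mul_add_half hx]
  nlinarith [sq_nonneg (gammaRatio x)]

lemma abs_sq_sub_le (hx : 0 < x) : |gammaRatio x ^ 2 - (x - 1/4)| ≤ 1/4 := by
  rw [abs_le]
  constructor <;> linarith [sq_le hx, sub_half_le_sq hx]

noncomputable def sqDiv (x : ℝ) : ℝ := gammaRatio x ^ 2 / (x - 1/4)

lemma tendsto_sqDiv : Tendsto sqDiv atTop (𝓝 1) := by
  have hden : Tendsto (fun x : ℝ => x - 1/4) atTop atTop :=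
    tendsto_atTop_add_const_right _ _ tendsto_id
  have hsmall : Tendsto (fun x => sqDiv x - 1) atTop (𝓝 0) := by
    refine squeeze_zero_norm' ?_ (tendsto_const_nhds (x := (1/4 : ℝ)).div_atTop hden)
    filter_upwards [eventually_gt_atTop (1/4 : ℝ)] with x hx
    have hpos : 0 < x - 1/4 := by linarith
    rw [sqDiv, div_sub_one hpos.ne', Real.norm_eq_abs, abs_div, abs_of_pos hpos]
    gcongr
    exact abs_sq_sub_le (by linarith)
  simpa using hsmall.add_const 1

lemma sqDiv_pos (hx : 1/4 < x) : 0 < sqDiv x :=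
  div_pos (pow_pos (pos (by linarith)) 2) (by linarith)

lemma sqDiv_mul_add_half (hx : 1/4 < x) :
    sqDiv x * sqDiv (x + 1/2) = x ^ 2 / (x ^ 2 - 1/16) := by
  have hmul : gammaRatio x ^ 2 * gammaRatio (x + 1/2) ^ 2 = x ^ 2 := by
    rw [← mul_pow, mul_add_half (by linarith)]
  rw [sqDiv, sqDiv, div_mul_div_comm, hmul]
  congr 1
  ring

lemma sqDiv_add_one_le (hx : 1/4 < x) : sqDiv (x + 1) ≤ sqDiv x := by
  have hx' : 1/4 < x + 1/2 := by linarith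
  have hR := sqDiv_pos hx'
  have hnext := sqDiv_mul_add_half hx'
  rw [add_assoc, add_halves] at hnext
  have hcur := sqDiv_mul_add_half hx
  rw [mul_comm, ← eq_div_iff_mul_eq hR.ne'] at hnext
  rw [← eq_div_iff_mul_eq hR.ne'] at hcur
  rw [hnext, hcur]
  gcongr ?_ / _
  exact antitoneOn_sq_div_sq_sub (Set.mem_Ioi.2 hx) (Set.mem_Ioi.2 hx') (by linarith)

lemma one_le_sqDiv (hx : 1/4 < x) : 1 ≤ sqDiv x :=
  le_of_tendsto_of_map_add_one_le (fun _ hy => sqDiv_add_one_le hy) tendsto_sqDiv hx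

lemma sqDiv_le (hx : 1/4 < x) : sqDiv x ≤ x ^ 2 / (x ^ 2 - 1/16) := by
  rw [← sqDiv_mul_add_half hx]
  exact le_mul_of_one_le_right (sqDiv_pos hx).le (one_le_sqDiv (by linarith))

lemma sq_bounds (hx : 1/4 < x) :
    x - 1/4 ≤ gammaRatio x ^ 2 ∧ gammaRatio x ^ 2 ≤ x ^ 2 / (x + 1/4) := by
  have hpos : 0 < x - 1/4 := by linarith
  have h16 : x ^ 2 - 1/16 = (x - 1/4) * (x + 1/4) := by ring
  have hlow := one_le_sqDiv hx
  have hup := sqDiv_le hx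
  rw [sqDiv, one_le_div hpos] at hlow
  rw [sqDiv, h16, div_le_div_iff₀ hpos (by positivity)] at hup
  refine ⟨hlow, ?_⟩
  rw [le_div_iff₀ (by linarith)]
  nlinarith

lemma abs_sub_sqrt_mul_le (hx : 1 ≤ x) :
    |gammaRatio x - √x * (1 - 1 / (8 * x))| ≤ √x / (8 * x ^ 2) := by
  set g := √x * (1 - 1 / (8 * x)) with hg
  have hx0 : 0 < x := by linarith
  have hs : 0 < √x := Real.sqrt_pos.2 hx0
  have hg_half : √x / 2 ≤ g := by
    have : 1 / (8 * x) ≤ 1 / 2 := by rw [div_le_div_iff₀ (by positivity) two_pos]; linarith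
    rw [hg]; nlinarith
  have hg_sq : g ^ 2 = x - 1/4 + 1 / (64 * x) := by
    rw [hg, mul_pow, Real.sq_sqrt hx0.le]; field_simp; ring
  obtain ⟨hlow, hup⟩ := sq_bounds (by linarith : 1/4 < x)
  have hup' : x ^ 2 / (x + 1/4) ≤ x - 1/4 + 1 / (16 * x) := by
    have hexpand : (x - 1/4 + 1 / (16 * x)) * (x + 1/4) = x ^ 2 + 1 / (64 * x) := by
      field_simp; ring
    rw [div_le_iff₀ (by linarith), hexpand]
    linarith [show 0 < 1 / (64 * x) by positivity]
  have hsq : |gammaRatio x ^ 2 - g ^ 2| ≤ 1 / (16 * x) := by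
    have : 1 / (64 * x) ≤ 1 / (16 * x) := by gcongr; norm_num
    rw [abs_le, hg_sq]
    constructor <;> linarith [show 0 < 1 / (64 * x) by positivity]
  calc |gammaRatio x - g| ≤ |gammaRatio x ^ 2 - g ^ 2| / g :=
        abs_sub_le_abs_sq_sub_div (pos hx0).le (by linarith)
    _ ≤ 1 / (16 * x) / (√x / 2) := by gcongr
    _ = √x / (8 * x ^ 2) := by
        field_simp
        rw [Real.sq_sqrt hx0.le]
        ring

end gammaRatio

theorem gamma_ratio_asymptotic :
    (fun x : ℝ => Real.Gamma (x + 1 / 2) / Real.Gamma x -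
        Real.sqrt x * (1 - 1 / (8 * x))) =O[atTop]
      (fun x : ℝ => Real.sqrt x / x ^ 2) := by
  refine IsBigO.of_bound (1/8) ?_
  filter_upwards [eventually_ge_atTop (1 : ℝ)] with x hx
  rw [Real.norm_eq_abs, Real.norm_of_nonneg (by positivity), ← mul_div_assoc, one_div_mul_eq_div,
    div_div]
  exact gammaRatio.abs_sub_sqrt_mul_le hx
end

section
/- With y = N/2, as N → ∞ through positive integers, (Γ(y+1/2)/Γ(y+1))^N = e^{-y log y} · e^{-1/4} · (1 + O(1/y)). -/
open Filter Asymptotics Real Topology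

/-!
Write `r(x) = Γ(x + 1/2) / Γ(x + 1)`. The functional equation gives
`r(x + 1) = r(x) (x + 1/2) / (x + 1)`, so `D(x) = (x + 1/4) r(x)²` satisfies
`D(x + 1) = D(x) (1 + 1 / (16 (x + 1)² (x + 1/4)))`. Log-convexity of `Γ` squeezes `r(x)²` between
`1 / (x + 1/2)` and `1 / x`, so `D(x) → 1`, and telescoping yields `exp (-1 / (16 x²)) ≤ D(x) ≤ 1`.
Hence `2x log r(x) = -x log (x + 1/4) + O(1/x) = -x log x - 1/4 + O(1/x)`; exponentiating at
`x = N/2` gives the claim.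
-/

lemma Real.Gamma_midpoint_sq_le {s t : ℝ} (hs : 0 < s) (ht : 0 < t) :
    Gamma ((s + t) / 2) ^ 2 ≤ Gamma s * Gamma t := by
  have h := Gamma_mul_add_mul_le_rpow_Gamma_mul_rpow_Gamma hs ht one_half_pos one_half_pos
    (by norm_num)
  rw [show 1 / 2 * s + 1 / 2 * t = (s + t) / 2 by ring] at h
  calc Gamma ((s + t) / 2) ^ 2 ≤ (Gamma s ^ (1 / 2 : ℝ) * Gamma t ^ (1 / 2 : ℝ)) ^ 2 :=
        pow_le_pow_left₀ (Gamma_pos_of_pos (by positivity)).le h 2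
    _ = Gamma s * Gamma t := by
        rw [mul_pow, ← rpow_natCast, ← rpow_natCast, ← rpow_mul (Gamma_pos_of_pos hs).le,
          ← rpow_mul (Gamma_pos_of_pos ht).le]
        norm_num

lemma tendsto_add_div_add_atTop (a b : ℝ) :
    Tendsto (fun x : ℝ => (x + a) / (x + b)) atTop (𝓝 1) := by
  have hinv : Tendsto (fun x : ℝ => (x + b)⁻¹) atTop (𝓝 0) :=
    tendsto_inv_atTop_zero.comp (tendsto_atTop_add_const_right _ b tendsto_id)
  have h : Tendsto (fun x : ℝ => 1 + (a - b) * (x + b)⁻¹) atTop (𝓝 1) := by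
    simpa using (hinv.const_mul (a - b)).const_add 1
  refine h.congr' ?_
  filter_upwards [eventually_gt_atTop (-b)] with x hx
  have : x + b ≠ 0 := by linarith
  field_simp
  ring

lemma abs_mul_log_add_sub_log_sub_le {x a : ℝ} (hx : 0 < x) (ha : 0 ≤ a) :
    |x * (log (x + a) - log x) - a| ≤ a ^ 2 / x := by
  have hxa : 0 < x + a := by linarith
  have hratio : 0 < (x + a) / x := div_pos hxa hx
  have hup : log (x + a) - log x ≤ a / x := by
    rw [← log_div hxa.ne' hx.ne']
    exact (log_le_sub_one_of_pos hratio).trans_eq (by field_simp; ring)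
  have hlow : a / (x + a) ≤ log (x + a) - log x := by
    rw [← log_div hxa.ne' hx.ne']
    exact (one_sub_inv_le_log_of_pos hratio).trans_eq' (by field_simp; ring)
  rw [abs_le]
  constructor
  · calc -(a ^ 2 / x) ≤ -(a ^ 2 / (x + a)) := by gcongr; linarith
      _ = x * (a / (x + a)) - a := by field_simp; ring
      _ ≤ x * (log (x + a) - log x) - a := by gcongr
  · calc x * (log (x + a) - log x) - a ≤ x * (a / x) - a := by gcongr
      _ = 0 := by field_simp; ring
      _ ≤ a ^ 2 / x := by positivity

noncomputable def gammaHalfRatio (x : ℝ) : ℝ := Gamma (x + 1 / 2) / Gamma (x + 1)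

noncomputable def gammaHalfRatioDefect (x : ℝ) : ℝ := (x + 1 / 4) * gammaHalfRatio x ^ 2

section

variable {x : ℝ}

lemma gammaHalfRatio_pos (hx : -1 / 2 < x) : 0 < gammaHalfRatio x :=
  div_pos (Gamma_pos_of_pos (by linarith)) (Gamma_pos_of_pos (by linarith))

lemma gammaHalfRatio_add_one (hx : -1 / 2 < x) :
    gammaHalfRatio (x + 1) = gammaHalfRatio x * ((x + 1 / 2) / (x + 1)) := by
  rw [gammaHalfRatio, gammaHalfRatio, add_right_comm, Gamma_add_one (by linarith),
    add_right_comm, Gamma_add_one (by linarith), mul_div_mul_comm, mul_comm]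

lemma inv_add_half_le_gammaHalfRatio_sq (hx : -1 / 2 < x) :
    (x + 1 / 2)⁻¹ ≤ gammaHalfRatio x ^ 2 := by
  have h := Gamma_midpoint_sq_le (show 0 < x + 1 / 2 by linarith)
    (show 0 < x + 1 / 2 + 1 by linarith)
  rw [Gamma_add_one (by linarith), show (x + 1 / 2 + (x + 1 / 2 + 1)) / 2 = x + 1 by ring] at h
  rw [gammaHalfRatio, div_pow, inv_le_iff_one_le_mul₀ (by linarith), div_mul_eq_mul_div,
    one_le_div (pow_pos (Gamma_pos_of_pos (by linarith)) 2)]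
  exact h.trans_eq (by ring)

lemma gammaHalfRatio_sq_le_inv (hx : 0 < x) : gammaHalfRatio x ^ 2 ≤ x⁻¹ := by
  have h := Gamma_midpoint_sq_le hx (show 0 < x + 1 by linarith)
  rw [show (x + (x + 1)) / 2 = x + 1 / 2 by ring] at h
  rw [gammaHalfRatio, div_pow, div_le_iff₀ (pow_pos (Gamma_pos_of_pos (by linarith)) 2),
    Gamma_add_one hx.ne']
  calc Gamma (x + 1 / 2) ^ 2 ≤ Gamma x * (x * Gamma x) := by rwa [Gamma_add_one hx.ne'] at h
    _ = x⁻¹ * (x * Gamma x) ^ 2 := by field_simp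

lemma tendsto_gammaHalfRatioDefect : Tendsto gammaHalfRatioDefect atTop (𝓝 1) := by
  refine tendsto_of_tendsto_of_tendsto_of_le_of_le' (tendsto_add_div_add_atTop (1 / 4) (1 / 2))
    (tendsto_add_div_add_atTop (1 / 4) 0) ?_ ?_
  all_goals filter_upwards [eventually_gt_atTop 0] with x hx
  · simpa [gammaHalfRatioDefect, div_eq_mul_inv] using
      mul_le_mul_of_nonneg_left (inv_add_half_le_gammaHalfRatio_sq (by linarith))
        (show 0 ≤ x + 1 / 4 by linarith)
  · simpa [gammaHalfRatioDefect, div_eq_mul_inv] using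
      mul_le_mul_of_nonneg_left (gammaHalfRatio_sq_le_inv hx) (show 0 ≤ x + 1 / 4 by linarith)

lemma gammaHalfRatioDefect_add_one (hx : -1 / 4 < x) :
    gammaHalfRatioDefect (x + 1) =
      gammaHalfRatioDefect x * (1 + 1 / (16 * (x + 1) ^ 2 * (x + 1 / 4))) := by
  have h₁ : x + 1 ≠ 0 := by linarith
  have h₂ : x * 4 + 1 ≠ 0 := by linarith
  rw [gammaHalfRatioDefect, gammaHalfRatioDefect, gammaHalfRatio_add_one (by linarith)]
  field_simp
  ring

lemma gammaHalfRatioDefect_nonneg (hx : -1 / 4 ≤ x) : 0 ≤ gammaHalfRatioDefect x :=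
  mul_nonneg (by linarith) (sq_nonneg _)

lemma gammaHalfRatioDefect_le_one (hx : 0 < x) : gammaHalfRatioDefect x ≤ 1 := by
  have hmono : Monotone fun n : ℕ => gammaHalfRatioDefect (x + n) := by
    refine monotone_nat_of_le_succ fun n => ?_
    have hxn : 0 < x + n := by positivity
    rw [Nat.cast_succ, ← add_assoc, gammaHalfRatioDefect_add_one (by linarith)]
    exact le_mul_of_one_le_right (gammaHalfRatioDefect_nonneg (by linarith))
      (le_add_of_nonneg_right (by positivity))
  simpa using hmono.ge_of_tendsto (tendsto_gammaHalfRatioDefect.comp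
    (tendsto_atTop_add_const_left _ x tendsto_natCast_atTop_atTop)) 0

-- The correction `exp (1 / (16 x²))` decreases by more than the defect grows in one step.
lemma gammaHalfRatioDefect_add_one_mul_exp_le (hx : 0 < x) :
    gammaHalfRatioDefect (x + 1) * exp (1 / (16 * (x + 1) ^ 2)) ≤
      gammaHalfRatioDefect x * exp (1 / (16 * x ^ 2)) := by
  have hstep :
      1 / (16 * (x + 1) ^ 2 * (x + 1 / 4)) ≤ 1 / (16 * x ^ 2) - 1 / (16 * (x + 1) ^ 2) := by
    rw [div_sub_div _ _ (by positivity) (by positivity), div_le_div_iff₀ (by positivity)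
      (by positivity)]
    nlinarith [pow_pos hx 3, pow_pos hx 4, pow_pos hx 5]
  have hgrowth : 1 + 1 / (16 * (x + 1) ^ 2 * (x + 1 / 4)) ≤
      exp (1 / (16 * x ^ 2) - 1 / (16 * (x + 1) ^ 2)) := by
    linarith [add_one_le_exp (1 / (16 * x ^ 2) - 1 / (16 * (x + 1) ^ 2))]
  rw [gammaHalfRatioDefect_add_one (by linarith), mul_assoc]
  refine mul_le_mul_of_nonneg_left ?_ (gammaHalfRatioDefect_nonneg (by linarith))
  calc _ ≤ exp (1 / (16 * x ^ 2) - 1 / (16 * (x + 1) ^ 2)) * exp (1 / (16 * (x + 1) ^ 2)) :=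
        mul_le_mul_of_nonneg_right hgrowth (exp_pos _).le
    _ = exp (1 / (16 * x ^ 2)) := by rw [← exp_add, sub_add_cancel]

lemma one_le_gammaHalfRatioDefect_mul_exp (hx : 0 < x) :
    1 ≤ gammaHalfRatioDefect x * exp (1 / (16 * x ^ 2)) := by
  have hanti : Antitone fun n : ℕ =>
      gammaHalfRatioDefect (x + n) * exp (1 / (16 * (x + n) ^ 2)) := by
    refine antitone_nat_of_succ_le fun n => ?_
    rw [Nat.cast_succ, ← add_assoc]
    exact gammaHalfRatioDefect_add_one_mul_exp_le (by positivity)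
  have hexp : Tendsto (fun y : ℝ => exp (1 / (16 * y ^ 2))) atTop (𝓝 1) := by
    have h := (continuous_exp.tendsto 0).comp ((tendsto_const_nhds (x := (1 : ℝ))).div_atTop
      ((tendsto_pow_atTop two_ne_zero).const_mul_atTop (by norm_num : (0:ℝ) < 16)))
    rwa [exp_zero] at h
  have hlim := (tendsto_gammaHalfRatioDefect.mul hexp).comp
    (tendsto_atTop_add_const_left _ x tendsto_natCast_atTop_atTop)
  rw [mul_one] at hlim
  simpa using hanti.le_of_tendsto hlim 0

lemma abs_log_gammaHalfRatioDefect_le (hx : 0 < x) :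
    |log (gammaHalfRatioDefect x)| ≤ 1 / (16 * x ^ 2) := by
  have hpos : 0 < gammaHalfRatioDefect x :=
    mul_pos (by linarith) (pow_pos (gammaHalfRatio_pos (by linarith)) 2)
  have hlow := one_le_gammaHalfRatioDefect_mul_exp hx
  rw [← exp_log hpos, ← exp_add, one_le_exp_iff] at hlow
  rw [abs_le]
  exact ⟨by linarith, (log_nonpos hpos.le (gammaHalfRatioDefect_le_one hx)).trans (by positivity)⟩

lemma abs_two_mul_log_gammaHalfRatio_add_le (hx : 0 < x) :
    |2 * x * log (gammaHalfRatio x) + x * log x + 1 / 4| ≤ 1 / (8 * x) := by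
  have hlogDefect :
      log (gammaHalfRatioDefect x) = log (x + 1 / 4) + 2 * log (gammaHalfRatio x) := by
    rw [gammaHalfRatioDefect, log_mul (by linarith)
      (pow_ne_zero 2 (gammaHalfRatio_pos (by linarith)).ne'), log_pow, Nat.cast_ofNat]
  have hD := abs_le.1 (abs_log_gammaHalfRatioDefect_le hx)
  have hxD : x * (1 / (16 * x ^ 2)) = 1 / (16 * x) := by field_simp
  have hD₁ := mul_le_mul_of_nonneg_left hD.2 hx.le
  have hD₂ := mul_le_mul_of_nonneg_left hD.1 hx.le
  rw [hxD] at hD₁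
  rw [mul_neg, hxD] at hD₂
  have hxlog : x * log (gammaHalfRatioDefect x) =
      x * log (x + 1 / 4) + 2 * x * log (gammaHalfRatio x) := by
    rw [hlogDefect]; ring
  have h8 : 1 / (8 * x) = 2 * (1 / (16 * x)) := by field_simp; norm_num
  have hL := abs_le.1 (abs_mul_log_add_sub_log_sub_le hx (by norm_num : (0 : ℝ) ≤ 1 / 4))
  have h16 : (1 / 4 : ℝ) ^ 2 / x = 1 / (16 * x) := by field_simp; norm_num
  rw [h16] at hL
  rw [abs_le]
  constructor <;> linarith

lemma abs_exp_sub_exp_le {u v : ℝ} (h : |u - v| ≤ 1) :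
    |exp u - exp v| ≤ 2 * exp v * |u - v| := by
  calc |exp u - exp v| = exp v * |exp (u - v) - 1| := by
        rw [← abs_of_pos (exp_pos v), ← abs_mul, mul_sub, ← exp_add, add_sub_cancel, mul_one,
          abs_of_pos (exp_pos v)]
    _ ≤ exp v * (2 * |u - v|) := by gcongr; exact abs_exp_sub_one_le h
    _ = 2 * exp v * |u - v| := by ring

lemma abs_exp_two_mul_log_gammaHalfRatio_sub_le (hx : 1 / 8 ≤ x) :
    |exp (2 * x * log (gammaHalfRatio x)) - exp (-x * log x) * exp (-1 / 4)| ≤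
      exp (-x * log x) / x := by
  have hx₀ : 0 < x := by linarith
  have hε := abs_two_mul_log_gammaHalfRatio_add_le hx₀
  have hdiff : 2 * x * log (gammaHalfRatio x) - (-x * log x + -1 / 4) =
      2 * x * log (gammaHalfRatio x) + x * log x + 1 / 4 := by ring
  rw [← exp_add]
  calc _ ≤ 2 * exp (-x * log x + -1 / 4) * (1 / (8 * x)) := by
        refine (abs_exp_sub_exp_le ?_).trans ?_
        · rw [hdiff]
          refine hε.trans ?_
          rw [div_le_one (by positivity)]; linarith
        · rw [hdiff]; gcongr
    _ = exp (-1 / 4) / 4 * (exp (-x * log x) / x) := by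
        rw [exp_add]; field_simp; ring_nf
    _ ≤ exp (-x * log x) / x := by
        refine mul_le_of_le_one_left (by positivity) ?_
        rw [div_le_one (by norm_num)]
        exact (exp_le_one_iff.2 (by norm_num)).trans (by norm_num)

end

theorem gamma_ratio_pow_asymptotic :
    (fun N : ℕ => (Real.Gamma ((N : ℝ) / 2 + 1 / 2) / Real.Gamma ((N : ℝ) / 2 + 1)) ^ N -
        Real.exp (-((N : ℝ) / 2) * Real.log ((N : ℝ) / 2)) * Real.exp (-1 / 4)) =O[atTop]
      (fun N : ℕ =>
        Real.exp (-((N : ℝ) / 2) * Real.log ((N : ℝ) / 2)) / ((N : ℝ) / 2)) := by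
  refine IsBigO.of_bound 1 (eventually_gt_atTop 0 |>.mono fun N hN => ?_)
  have hy : 1 / 8 ≤ (N : ℝ) / 2 := by
    have : (1 : ℝ) ≤ N := by exact_mod_cast hN
    linarith
  have hpow : gammaHalfRatio ((N : ℝ) / 2) ^ N =
      exp (2 * ((N : ℝ) / 2) * log (gammaHalfRatio ((N : ℝ) / 2))) := by
    rw [← exp_log (pow_pos (gammaHalfRatio_pos (by linarith)) N), log_pow]
    ring_nf
  rw [Real.norm_eq_abs, Real.norm_eq_abs, one_mul, abs_of_pos (a := _ / ((N : ℝ) / 2))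
    (by positivity)]
  exact hpow ▸ abs_exp_two_mul_log_gammaHalfRatio_sub_le hy
end

section
/- Define P_N = Γ((N+1)/2)^N / G(N+1). Then as N → ∞, P_{N+1}/P_N = (e/4)^{(2N+1)/4} · (1 + O(1/N)). -/
/-!
Legendre's duplication formula gives `Γ((N+1)/2) Γ((N+2)/2) = √π N! / 2^N`, and one of these two
factors is a factorial (which one depends on the parity of `N`). Hence `log (P (N+1) / P N)` is an
explicit combination of `log q!`, `log (2q)!` and elementary terms, where `q = ⌈N/2⌉`. Writing
`log n! = n log n - n + log (2πn) / 2 + r n` with Robbins' bounds `1/(12n+6) ≤ r n ≤ 1/(12n)`, the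
main terms cancel exactly against `(2N+1)/4 · log (e/4)`, leaving
`±((4q ± 1) r q - (2q ± 1) r (2q) - 1/4) = O(1/q)`; exponentiating gives the claim.
-/

open Filter Asymptotics

open Real Topology Stirling
open scoped Nat

lemma sub_le_sub_of_sdiff_le {f g : ℕ → ℝ} {a b : ℝ} {n₀ : ℕ} (hf : Tendsto f atTop (𝓝 a))
    (hg : Tendsto g atTop (𝓝 b)) (h : ∀ n, n₀ ≤ n → f n - f (n + 1) ≤ g n - g (n + 1)) :
    f n₀ - a ≤ g n₀ - b := by
  have hanti : Antitone fun k ↦ g (k + n₀) - f (k + n₀) := antitone_nat_of_succ_le fun k ↦ by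
    have := h (k + n₀) (by omega)
    rw [add_right_comm]
    linarith
  have := hanti.le_of_tendsto ((hg.sub hf).comp (tendsto_add_atTop_nat n₀)) 0
  simp only [zero_add] at this
  linarith

lemma isBigO_sub_of_isBigO_log_sub {α : Type*} {l : Filter α} {f g h : α → ℝ}
    (hf : ∀ᶠ x in l, 0 < f x) (hg : ∀ᶠ x in l, 0 < g x)
    (hlog : (fun x ↦ log (f x) - log (g x)) =O[l] h) (hh : Tendsto h l (𝓝 0)) :
    (fun x ↦ f x - g x) =O[l] fun x ↦ g x * h x := by
  have hexp : (fun x ↦ exp (log (f x) - log (g x)) - 1) =O[l] h := by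
    have := (hasDerivAt_exp 0).isBigO_sub.comp_tendsto (hlog.trans_tendsto hh)
    simp only [exp_zero, sub_zero] at this
    exact this.trans hlog
  refine ((isBigO_refl g l).mul hexp).congr' ?_ EventuallyEq.rfl
  filter_upwards [hf, hg] with x hfx hgx
  rw [exp_sub, exp_log hfx, exp_log hgx]
  field_simp

noncomputable def stirlingRemainder (n : ℕ) : ℝ := log (stirlingSeq n) - log √π

lemma log_factorial_eq_stirling {n : ℕ} (hn : n ≠ 0) :
    log n ! = n * log n - n + log n / 2 + log (2 * π) / 2 + stirlingRemainder n := by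
  rw [stirlingRemainder, log_stirlingSeq_formula, log_sqrt pi_pos.le,
    log_mul two_ne_zero (Nat.cast_ne_zero.mpr hn), log_mul two_ne_zero pi_ne_zero,
    log_div (Nat.cast_ne_zero.mpr hn) (exp_ne_zero 1), log_exp]
  ring

lemma tendsto_stirlingRemainder : Tendsto stirlingRemainder atTop (𝓝 0) := by
  have := ((continuousAt_log (by positivity)).tendsto.comp tendsto_stirlingSeq_sqrt_pi).sub_const
      (log √π)
  rwa [sub_self] at this

lemma le_log_stirlingSeq_sdiff {n : ℕ} (hn : n ≠ 0) :
    1 / (3 * (2 * n + 1) ^ 2) ≤ log (stirlingSeq n) - log (stirlingSeq (n + 1)) := by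
  obtain ⟨m, rfl⟩ := Nat.exists_eq_add_one_of_ne_zero hn
  refine le_of_eq_of_le ?_ (le_hasSum (log_stirlingSeq_sdiff_hasSum m) 0 fun _ _ ↦ by positivity)
  push_cast
  field_simp
  ring

lemma stirlingRemainder_sdiff (n : ℕ) :
    stirlingRemainder n - stirlingRemainder (n + 1) =
      log (stirlingSeq n) - log (stirlingSeq (n + 1)) := by
  simp only [stirlingRemainder]; ring

lemma stirlingRemainder_le {n : ℕ} (hn : n ≠ 0) : stirlingRemainder n ≤ 1 / (12 * n) := by
  have hg : Tendsto (fun n : ℕ ↦ 1 / (12 * (n : ℝ))) atTop (𝓝 0) :=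
    tendsto_const_nhds.div_atTop (tendsto_natCast_atTop_atTop.const_mul_atTop (by norm_num))
  simpa using sub_le_sub_of_sdiff_le tendsto_stirlingRemainder hg fun k hk ↦ by
    have hk₀ : (k : ℝ) ≠ 0 := Nat.cast_ne_zero.mpr (by omega)
    rw [stirlingRemainder_sdiff]
    convert log_stirlingSeq_sdiff_le k using 1
    field_simp; push_cast; ring

lemma le_stirlingRemainder {n : ℕ} (hn : n ≠ 0) : 1 / (12 * n + 6) ≤ stirlingRemainder n := by
  have hf : Tendsto (fun n : ℕ ↦ 1 / (12 * (n : ℝ) + 6)) atTop (𝓝 0) :=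
    tendsto_const_nhds.div_atTop (tendsto_atTop_add_const_right _ 6
      (tendsto_natCast_atTop_atTop.const_mul_atTop (by norm_num)))
  simpa using sub_le_sub_of_sdiff_le hf tendsto_stirlingRemainder fun k hk ↦ by
    rw [stirlingRemainder_sdiff]
    refine le_trans ?_ (le_log_stirlingSeq_sdiff (by omega))
    push_cast
    rw [div_sub_div _ _ (by positivity) (by positivity),
      div_le_div_iff₀ (by positivity) (by positivity)]
    nlinarith

lemma abs_stirlingRemainder_combination_le {q : ℕ} (hq : q ≠ 0) {c : ℝ} (hc : |c| ≤ 1) :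
    |(4 * q + c) * stirlingRemainder q - (2 * q + c) * stirlingRemainder (2 * q) - 1 / 4| ≤
      1 / q := by
  set a := stirlingRemainder q
  set b := stirlingRemainder (2 * q)
  have h2q : (0 : ℝ) < 2 * q := by positivity
  have ha₁ : 12 * q * a ≤ 1 := by
    have := stirlingRemainder_le hq
    rwa [le_div_iff₀ (by positivity), mul_comm] at this
  have ha₂ : 1 ≤ (12 * q + 6) * a := by
    have := le_stirlingRemainder hq
    rwa [div_le_iff₀ (by positivity), mul_comm] at this
  have hb₁ : 24 * q * b ≤ 1 := by
    have := stirlingRemainder_le (n := 2 * q) (by omega)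
    rw [le_div_iff₀ (by positivity)] at this
    push_cast at this; linarith
  have hb₂ : 1 ≤ (24 * q + 6) * b := by
    have := le_stirlingRemainder (n := 2 * q) (by omega)
    rw [div_le_iff₀ (by positivity)] at this
    push_cast at this; linarith
  -- `4q · r q ≈ 1/3` and `2q · r (2q) ≈ 1/12`: the leading terms cancel against `1/4`.
  have hmain : |4 * q * a - 2 * q * b - 1 / 4| ≤ 1 / (2 * q) := abs_le.mpr
    ⟨by rw [neg_le, le_div_iff₀ h2q]; nlinarith, by rw [le_div_iff₀ h2q]; nlinarith⟩
  have hab : |a - b| ≤ 1 / (2 * q) := abs_le.mpr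
    ⟨by rw [neg_le, le_div_iff₀ h2q]; nlinarith, by rw [le_div_iff₀ h2q]; nlinarith⟩
  calc |(4 * q + c) * a - (2 * q + c) * b - 1 / 4|
      = |(4 * q * a - 2 * q * b - 1 / 4) + c * (a - b)| := by ring_nf
    _ ≤ |4 * q * a - 2 * q * b - 1 / 4| + |c| * |a - b| := by
        rw [← abs_mul]; exact abs_add_le _ _
    _ ≤ 1 / (2 * q) + 1 * (1 / (2 * q)) := by gcongr
    _ = 1 / q := by field_simp; ring

lemma P_pos (N : ℕ) : 0 < P N := by
  unfold P; positivity

lemma log_P_succ_div_P (N : ℕ) :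
    log (P (N + 1) / P N) =
      (N + 1) * log (Gamma ((N + 2) / 2)) - N * log (Gamma ((N + 1) / 2)) - log N ! := by
  have hratio :
      P (N + 1) / P N = Gamma ((N + 2) / 2) ^ (N + 1) / (Gamma ((N + 1) / 2) ^ N * N !) := by
    rw [P, P, Finset.prod_range_succ, Nat.cast_succ, add_assoc, one_add_one_eq_two]
    field_simp
  rw [hratio, log_div (by positivity) (by positivity), log_mul (by positivity) (by positivity),
    log_pow, log_pow]
  push_cast
  ring

lemma log_Gamma_add_log_Gamma_add_half (N : ℕ) :
    log (Gamma ((N + 1) / 2)) + log (Gamma ((N + 2) / 2)) = log N ! - N * log 2 + log π / 2 := by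
  have h := Gamma_mul_Gamma_add_half (((N : ℝ) + 1) / 2)
  rw [show ((N : ℝ) + 1) / 2 + 1 / 2 = (N + 2) / 2 by ring,
    show 2 * (((N : ℝ) + 1) / 2) = N + 1 by ring, Gamma_nat_eq_factorial] at h
  rw [← log_mul (by positivity) (by positivity), h, log_mul (by positivity) (by positivity),
    log_mul (by positivity) (by positivity), log_rpow two_pos, log_sqrt pi_pos.le]
  ring

lemma log_P_succ_div_P_of_even {N q : ℕ} (hN : N = 2 * q) (hq : q ≠ 0) :
    log (P (N + 1) / P N) = (2 * N + 1) / 4 * (1 - 2 * log 2) +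
      ((4 * q + 1) * stirlingRemainder q - (2 * q + 1) * stirlingRemainder (2 * q) - 1 / 4) := by
  subst hN
  have hB : Gamma (((2 * q : ℕ) + 2) / 2) = q ! := by
    rw [← Gamma_nat_eq_factorial]; push_cast; ring_nf
  have hdup := log_Gamma_add_log_Gamma_add_half (2 * q)
  rw [hB] at hdup
  rw [log_P_succ_div_P, hB, eq_sub_of_add_eq hdup, log_factorial_eq_stirling hq,
    log_factorial_eq_stirling (by omega)]
  push_cast
  rw [log_mul (x := 2) (y := q) two_ne_zero (by exact_mod_cast hq),
    log_mul two_ne_zero pi_ne_zero]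
  ring

lemma log_P_succ_div_P_of_odd {N q : ℕ} (hN : N + 1 = 2 * q) :
    log (P (N + 1) / P N) = (2 * N + 1) / 4 * (1 - 2 * log 2) -
      ((4 * q - 1) * stirlingRemainder q - (2 * q - 1) * stirlingRemainder (2 * q) - 1 / 4) := by
  have hq : q ≠ 0 := by omega
  have hNq : (N : ℝ) + 1 = 2 * q := by exact_mod_cast hN
  have hA : log (Gamma ((N + 1) / 2)) = log q ! - log q := by
    rw [hNq, ← Gamma_nat_eq_factorial, Gamma_add_one (by exact_mod_cast hq),
      log_mul (by exact_mod_cast hq) (by positivity)]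
    ring_nf
  have hL : log N ! = log (2 * q) ! - log (2 * q) := by
    rw [← hN, Nat.factorial_succ, Nat.cast_mul, log_mul (by positivity) (by positivity)]
    push_cast; rw [hNq]; ring
  have hdup := log_Gamma_add_log_Gamma_add_half N
  rw [log_P_succ_div_P, eq_sub_of_add_eq' hdup, hA, hL, log_factorial_eq_stirling hq,
    log_factorial_eq_stirling (by omega)]
  rw [eq_sub_of_add_eq hNq]
  push_cast
  rw [log_mul (x := 2) (y := q) two_ne_zero (by exact_mod_cast hq),
    log_mul two_ne_zero pi_ne_zero]
  ring

lemma abs_log_P_succ_div_P_sub_le {N : ℕ} (hN : N ≠ 0) :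
    |log (P (N + 1) / P N) - (2 * N + 1) / 4 * (1 - 2 * log 2)| ≤ 2 / N := by
  obtain ⟨q, rfl | rfl⟩ := Nat.even_or_odd' N
  · rw [log_P_succ_div_P_of_even rfl (by omega), add_sub_cancel_left]
    convert abs_stirlingRemainder_combination_le (q := q) (c := 1) (by omega) (by simp) using 1
    push_cast; field_simp
  · rw [log_P_succ_div_P_of_odd (q := q + 1) (by ring), sub_sub_cancel_left, abs_neg]
    calc _ ≤ 1 / ((q + 1 : ℕ) : ℝ) := by
          simpa [← sub_eq_add_neg] using
            abs_stirlingRemainder_combination_le (c := -1) (q := q + 1) (by omega) (by simp)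
      _ ≤ 2 / ((2 * q + 1 : ℕ) : ℝ) := by
          rw [div_le_div_iff₀ (by positivity) (by positivity)]; push_cast; linarith

theorem P_ratio_asymptotic :
    (fun N : ℕ => P (N + 1) / P N -
        (Real.exp 1 / 4) ^ ((2 * (N : ℝ) + 1) / 4)) =O[atTop]
      (fun N : ℕ => (Real.exp 1 / 4) ^ ((2 * (N : ℝ) + 1) / 4) / (N : ℝ)) := by
  have hlog : (fun N : ℕ ↦ log (P (N + 1) / P N) - log ((exp 1 / 4) ^ ((2 * (N : ℝ) + 1) / 4)))
      =O[atTop] fun N ↦ (N : ℝ)⁻¹ := IsBigO.of_bound 2 <| by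
    filter_upwards [eventually_ne_atTop 0] with N hN
    have hlog4 : log (exp 1 / 4) = 1 - 2 * log 2 := by
      rw [log_div (exp_ne_zero 1) four_ne_zero, log_exp, show (4 : ℝ) = 2 ^ 2 by norm_num,
        log_pow, Nat.cast_ofNat]
    rw [log_rpow (by positivity), hlog4, norm_inv, Real.norm_natCast, ← div_eq_mul_inv]
    exact abs_log_P_succ_div_P_sub_le hN
  simpa [div_eq_mul_inv] using isBigO_sub_of_isBigO_log_sub
    (Eventually.of_forall fun N ↦ div_pos (P_pos (N + 1)) (P_pos N))
    (Eventually.of_forall fun N ↦ by positivity) hlog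
    (tendsto_inv_atTop_zero.comp tendsto_natCast_atTop_atTop)
end
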